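/- For every z in the upper half-plane ℍ and every real c ≥ 0, the imaginary part of the principal square root of z² - c (with branch chosen so the result lies in ℍ) is at least the imaginary part of z: Im(√(z² - c)) ≥ Im(z). -/
import Mathlib


/-- For `z` in the upper half-plane and `c ≥ 0`, the square root of `z² - c`
lying in the closed upper half-plane has imaginary part at least `Im z`:
`Im √(z² - c) ≥ Im z`. -/
theorem im_sqrt_sq_sub_const_ge (z : ℂ) (hz : 0 < z.im) (c : ℝ) (hc : 0 ≤ c)
    (w : ℂ) (hw : w ^ 2 = z ^ 2 - (c:ℂ)) (hwim : 0 ≤ w.im) :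
    z.im ≤ w.im := by
  have h1 := congrArg Complex.re hw
  have h2 := congrArg Complex.im hw
  simp [pow_two, Complex.mul_re, Complex.mul_im] at h1 h2
  by_contra h
  push_neg at h
  have hy0 : 0 < w.im := by
    rcases hwim.lt_or_eq with h' | h'
    · exact h'
    · exfalso
      rw [← h'] at h1 h2
      have hzre : z.re = 0 := by
        rcases mul_eq_zero.mp (by linarith : z.re * z.im = 0) with h0 | h0
        · exact h0
        · exact absurd h0 (ne_of_gt hz)
      nlinarith [sq_nonneg w.re]
  have key : (z.re ^ 2 + w.im ^ 2) * (z.im ^ 2 - w.im ^ 2) + c * w.im ^ 2 = 0 := by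
    linear_combination (-(w.re * w.im + z.re * z.im) / 2) * h2 + (w.im ^ 2) * h1
  have hb2 : 0 < z.im ^ 2 - w.im ^ 2 := by nlinarith
  have hay : 0 < z.re ^ 2 + w.im ^ 2 := by positivity
  nlinarith [mul_pos hay hb2, mul_nonneg hc (sq_nonneg w.im)]
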